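/- arXiv:2603.13848 — 2 statements merged into one kernel-verified Lean document; each statement's English description precedes it below -/
import Mathlib

section
/- For fixed λ with -1 ≤ λ ≤ 1 and λ ≠ 0, λ ≠ -1, the function I_λ(t) = ((1-t)^{-λ/2} (1-λ²t)^{-1/2} - 1)/(λ(λ+1)) is strictly increasing on [0,1). -/
/-! Up to the positive factor `(1 - t)^(-λ/2 - 1) (1 - λ²t)^(-3/2) / 2`, the numerator of the
derivative of `(1 - t)^(-λ/2) (1 - λ²t)^(-1/2)` is `λ(1 - λ²t) + λ²(1 - t) = λ(1 + λ)(1 - λt)`.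
The factor `λ(λ + 1)` cancels against the normalisation, leaving `1 - λt > 0`. -/

open Real Set

noncomputable def I (l t : ℝ) : ℝ :=
  ((1 - t) ^ (-(l / 2)) * (1 - l ^ 2 * t) ^ (-(1 / 2 : ℝ)) - 1) / (l * (l + 1))

lemma hasDerivAt_one_sub_mul_rpow (p a : ℝ) {t : ℝ} (ht : 0 < 1 - p * t) :
    HasDerivAt (fun t => (1 - p * t) ^ a) (-(a * p) * (1 - p * t) ^ (a - 1)) t := by
  have h := (((hasDerivAt_id' t).const_mul p).const_sub 1).rpow_const (p := a) (Or.inl ht.ne')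
  exact h.congr_deriv (by ring)

lemma hasDerivAt_I {l t : ℝ} (hl0 : l ≠ 0) (hl1 : l + 1 ≠ 0) (ht : 0 < 1 - t)
    (hlt : 0 < 1 - l ^ 2 * t) :
    HasDerivAt (I l)
      ((1 - t) ^ (-(l / 2) - 1) * (1 - l ^ 2 * t) ^ (-(1 / 2 : ℝ) - 1) * (1 - l * t) / 2) t := by
  have hu := hasDerivAt_one_sub_mul_rpow 1 (-(l / 2)) (t := t) (by rwa [one_mul])
  have hv := hasDerivAt_one_sub_mul_rpow (l ^ 2) (-(1 / 2 : ℝ)) hlt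
  simp only [one_mul] at hu
  refine (((hu.mul hv).sub_const 1).div_const (l * (l + 1))).congr_deriv ?_
  rw [rpow_sub_one ht.ne', rpow_sub_one hlt.ne']
  field_simp
  ring

theorem stmt_0 (l : ℝ) (hl1 : -1 ≤ l) (hl2 : l ≤ 1) (hl0 : l ≠ 0) (hlm1 : l ≠ -1) :
    StrictMonoOn (fun t : ℝ =>
      ((1 - t) ^ (-(l / 2)) * (1 - l ^ 2 * t) ^ (-(1 / 2 : ℝ)) - 1) / (l * (l + 1)))
      (Set.Ico (0 : ℝ) 1) := by
  have hl1' : l + 1 ≠ 0 := fun h => hlm1 (by linarith)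
  have hl_sq : l ^ 2 ≤ 1 := by nlinarith
  have hderiv : ∀ t ∈ Ico (0 : ℝ) 1, HasDerivAt (I l)
      ((1 - t) ^ (-(l / 2) - 1) * (1 - l ^ 2 * t) ^ (-(1 / 2 : ℝ) - 1) * (1 - l * t) / 2) t :=
    fun t ⟨ht0, ht1⟩ => hasDerivAt_I hl0 hl1' (by linarith) (by nlinarith)
  show StrictMonoOn (I l) (Ico 0 1)
  refine strictMonoOn_of_deriv_pos (convex_Ico 0 1)
    (fun t ht => (hderiv t ht).continuousAt.continuousWithinAt) fun t ht => ?_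
  rw [interior_Ico] at ht
  obtain ⟨ht0, ht1⟩ := ht
  have h₁ : 0 < 1 - t := by linarith
  have h₂ : 0 < 1 - l ^ 2 * t := by nlinarith
  have h₃ : 0 < 1 - l * t := by nlinarith
  rw [(hderiv t (Ioo_subset_Ico_self ⟨ht0, ht1⟩)).deriv]
  positivity
end

section
/- The Pearson divergence satisfies 0 ≤ I_P({p_{ij}}; {p_{i·}p_{·j}}) ≤ (min(r,c) - 1)/2, and therefore the measure ρ²_{(1)} = 1 - (2I_P+1)^{-1} satisfies 0 ≤ ρ²_{(1)} ≤ 1 - 1/min(r,c). -/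
/-! Expanding the square gives `2 I_P + 1 = ∑ p_{ij}² / (p_{i·} p_{·j})`. Since `p_{ij} ≤ p_{i·}`,
each term is at most `p_{ij} / p_{·j}`, and these sum to at most `1` over each column, so the sum is
at most `c`; symmetrically it is at most `r`. -/

open Finset

lemma sq_sub_div_self_eq {x q : ℝ} (hq : q ≠ 0) : (x - q) ^ 2 / q = x ^ 2 / q - 2 * x + q := by
  field_simp
  ring

lemma sq_div_mul_le_div {x a b : ℝ} (hx : 0 ≤ x) (hxa : x ≤ a) (hb : 0 ≤ b) :
    x ^ 2 / (a * b) ≤ x / b :=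
  calc x ^ 2 / (a * b) = x / a * (x / b) := by rw [sq, mul_div_mul_comm]
    _ ≤ 1 * (x / b) := by
        gcongr ?_ * _
        exact div_le_one_of_le₀ hxa (hx.trans hxa)
    _ = x / b := one_mul _

section ContingencyTable

variable {ι κ : Type*} [Fintype ι] [Fintype κ] {p : ι → κ → ℝ}

lemma sum_sum_sq_div_marginals_le_card_right (hp : ∀ i j, 0 ≤ p i j) :
    ∑ i, ∑ j, p i j ^ 2 / ((∑ j', p i j') * ∑ i', p i' j) ≤ Fintype.card κ := by
  rw [sum_comm, ← nsmul_one, ← Finset.card_univ, ← sum_const]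
  refine sum_le_sum fun j _ => ?_
  calc ∑ i, p i j ^ 2 / ((∑ j', p i j') * ∑ i', p i' j)
      ≤ ∑ i, p i j / ∑ i', p i' j := by
        refine sum_le_sum fun i _ => sq_div_mul_le_div (hp i j) ?_ ?_
        · exact single_le_sum (fun j' _ => hp i j') (mem_univ j)
        · exact sum_nonneg fun i' _ => hp i' j
    _ ≤ 1 := by
        rw [← sum_div]
        exact div_self_le_one _

lemma sum_sum_sq_div_marginals_le_card_left (hp : ∀ i j, 0 ≤ p i j) :
    ∑ i, ∑ j, p i j ^ 2 / ((∑ j', p i j') * ∑ i', p i' j) ≤ Fintype.card ι := by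
  have := sum_sum_sq_div_marginals_le_card_right (p := fun j i => p i j) fun j i => hp i j
  simpa only [mul_comm (∑ j', p _ j'), sum_comm (γ := ι)] using this

lemma sum_sum_sq_sub_div_marginals_eq (hsum : ∑ i, ∑ j, p i j = 1)
    (hrow : ∀ i, 0 < ∑ j, p i j) (hcol : ∀ j, 0 < ∑ i, p i j) :
    ∑ i, ∑ j, (p i j - (∑ j', p i j') * ∑ i', p i' j) ^ 2 / ((∑ j', p i j') * ∑ i', p i' j)
      = ∑ i, ∑ j, p i j ^ 2 / ((∑ j', p i j') * ∑ i', p i' j) - 1 := by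
  have hcolsum : ∑ j, ∑ i, p i j = 1 := by rw [sum_comm, hsum]
  have hprod : ∑ i, ∑ j, (∑ j', p i j') * ∑ i', p i' j = 1 := by
    rw [← sum_mul_sum, hsum, hcolsum, one_mul]
  simp only [sq_sub_div_self_eq (mul_pos (hrow _) (hcol _)).ne', sum_add_distrib,
    sum_sub_distrib, hprod]
  simp only [← mul_sum, hsum]
  ring

end ContingencyTable

theorem stmt_8_general (r c : ℕ) (p : Fin r → Fin c → ℝ)
    (hp : ∀ i j, 0 ≤ p i j) (hsum : ∑ i, ∑ j, p i j = 1)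
    (hrow : ∀ i, 0 < ∑ j, p i j) (hcol : ∀ j, 0 < ∑ i, p i j)
    (IP : ℝ)
    (hIP : IP = (1 / 2 : ℝ) * ∑ i, ∑ j,
        (p i j - (∑ j', p i j') * (∑ i', p i' j)) ^ 2 /
          ((∑ j', p i j') * (∑ i', p i' j))) :
    (0 ≤ IP ∧ IP ≤ ((min r c : ℝ) - 1) / 2) ∧
    (0 ≤ 1 - 1 / (2 * IP + 1) ∧ 1 - 1 / (2 * IP + 1) ≤ 1 - 1 / (min r c : ℝ)) := by
  have hIP_nonneg : 0 ≤ IP := by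
    rw [hIP]
    exact mul_nonneg (by norm_num) <| sum_nonneg fun i _ => sum_nonneg fun j _ =>
      div_nonneg (sq_nonneg _) (mul_pos (hrow i) (hcol j)).le
  have hkey : 2 * IP + 1 = ∑ i, ∑ j, p i j ^ 2 / ((∑ j', p i j') * ∑ i', p i' j) := by
    rw [hIP, sum_sum_sq_sub_div_marginals_eq hsum hrow hcol]
    ring
  have hle_min : 2 * IP + 1 ≤ (min r c : ℝ) := by
    rw [hkey]
    refine le_min ?_ ?_
    · simpa using sum_sum_sq_div_marginals_le_card_left hp
    · simpa using sum_sum_sq_div_marginals_le_card_right hp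
  have hpos : 0 < 2 * IP + 1 := by linarith
  refine ⟨⟨hIP_nonneg, by linarith⟩, ?_, ?_⟩
  · linarith [(div_le_one hpos).mpr (by linarith : 1 ≤ 2 * IP + 1)]
  · linarith [one_div_le_one_div_of_le hpos hle_min]

theorem stmt_8 (r c : ℕ) (hr : 0 < r) (hc : 0 < c) (p : Fin r → Fin c → ℝ)
    (hp : ∀ i j, 0 ≤ p i j) (hsum : ∑ i, ∑ j, p i j = 1)
    (hrow : ∀ i, 0 < ∑ j, p i j) (hcol : ∀ j, 0 < ∑ i, p i j)
    (IP : ℝ)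
    (hIP : IP = (1 / 2 : ℝ) * ∑ i, ∑ j,
        (p i j - (∑ j', p i j') * (∑ i', p i' j)) ^ 2 /
          ((∑ j', p i j') * (∑ i', p i' j))) :
    (0 ≤ IP ∧ IP ≤ ((min r c : ℝ) - 1) / 2) ∧
    (0 ≤ 1 - 1 / (2 * IP + 1) ∧ 1 - 1 / (2 * IP + 1) ≤ 1 - 1 / (min r c : ℝ)) :=
  stmt_8_general r c p hp hsum hrow hcol IP hIP
end
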